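/- For x ≥ 1/2, the first central moment of K_n* equals K_n*(t−x;x) = (n/(n+β) − 1)x + α/(n+β). -/
import Mathlib


noncomputable section

/-- θ_k = 0 if k even, 1 if k odd. -/
def theta (k : ℕ) : ℝ := if Even k then 0 else 1

/-- Dunkl coefficients γ_μ(n). -/
def gammaD (mu : ℝ) (n : ℕ) : ℝ :=
  if Even n then
    2 ^ n * (Nat.factorial (n / 2)) * Real.Gamma ((n / 2 : ℕ) + mu + 1 / 2) / Real.Gamma (mu + 1 / 2)
  else
    2 ^ n * (Nat.factorial (n / 2)) * Real.Gamma ((n / 2 : ℕ) + mu + 3 / 2) / Real.Gamma (mu + 1 / 2)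

/-- Dunkl exponential e_μ(x) = Σ xⁿ/γ_μ(n). -/
def eD (mu x : ℝ) : ℝ := ∑' n : ℕ, x ^ n / gammaD mu n

/-- r_n(x) = x - 1/(2n). -/
def rn (n : ℕ) (x : ℝ) : ℝ := x - 1 / (2 * n)

/-- Modified Dunkl Szász–Mirakjan–Kantorovich operator K_n. -/
def Kn (mu : ℝ) (n : ℕ) (f : ℝ → ℝ) (x : ℝ) : ℝ :=
  (n / eD mu (n * rn n x)) * ∑' k : ℕ, (n * rn n x) ^ k / gammaD mu k *
    ∫ t in (((k : ℝ) + 2 * mu * theta k) / n)..(((k : ℝ) + 1 + 2 * mu * theta k) / n), f t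

/-- Stancu-type modified Dunkl Szász–Kantorovich operator K_n^*. -/
def KnStar (mu a b : ℝ) (n : ℕ) (f : ℝ → ℝ) (x : ℝ) : ℝ :=
  (n / eD mu (n * rn n x)) * ∑' k : ℕ, (n * rn n x) ^ k / gammaD mu k *
    ∫ t in (((k : ℝ) + 2 * mu * theta k) / n)..(((k : ℝ) + 1 + 2 * mu * theta k) / n),
      f ((n * t + a) / (n + b))

/-- Dunkl Szász–Kantorovich–Stancu operator T_n^*. -/
def TnStar (mu a b : ℝ) (n : ℕ) (f : ℝ → ℝ) (x : ℝ) : ℝ :=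
  (n / eD mu (n * x)) * ∑' k : ℕ, (n * x) ^ k / gammaD mu k *
    ∫ t in (((k : ℝ) + 2 * mu * theta k) / n)..(((k : ℝ) + 1 + 2 * mu * theta k) / n),
      f ((n * t + a) / (n + b))

/-- Modulus of continuity of f on [0,∞). -/
def modCont (f : ℝ → ℝ) (d : ℝ) : ℝ :=
  sSup {y | ∃ t s : ℝ, 0 ≤ t ∧ 0 ≤ s ∧ |t - s| ≤ d ∧ y = |f t - f s|}

lemma theta_nonneg (k : ℕ) : 0 ≤ theta k := by unfold theta; split <;> norm_num

lemma gammaD_pos {mu : ℝ} (hmu : 0 ≤ mu) (k : ℕ) : 0 < gammaD mu k := by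
  have h1 : 0 < Real.Gamma (mu + 1/2) := Real.Gamma_pos_of_pos (by linarith)
  unfold gammaD
  split
  · have : 0 < Real.Gamma (((k/2 : ℕ) : ℝ) + mu + 1/2) :=
      Real.Gamma_pos_of_pos (by positivity)
    positivity
  · have : 0 < Real.Gamma (((k/2 : ℕ) : ℝ) + mu + 3/2) :=
      Real.Gamma_pos_of_pos (by positivity)
    positivity

lemma gammaD_zero {mu : ℝ} (hmu : 0 ≤ mu) : gammaD mu 0 = 1 := by
  have h1 : Real.Gamma (mu + 2⁻¹) ≠ 0 :=
    (Real.Gamma_pos_of_pos (by linarith)).ne'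
  simp [gammaD, div_self h1]

lemma gammaD_succ {mu : ℝ} (hmu : 0 ≤ mu) (k : ℕ) :
    gammaD mu (k+1) = ((k : ℝ) + 1 + 2 * mu * theta (k+1)) * gammaD mu k := by
  have h1 : Real.Gamma (mu + 1/2) ≠ 0 := (Real.Gamma_pos_of_pos (by linarith)).ne'
  rcases Nat.even_or_odd k with he | ho
  · obtain ⟨m, rfl⟩ := he
    have hek : Even (m + m) := Even.add_self m
    have hok : ¬ Even (m + m + 1) := by simp [Nat.even_add_one, hek]
    have hdiv1 : (m + m) / 2 = m := by omega
    have hdiv2 : (m + m + 1) / 2 = m := by omega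
    have harg : ((m:ℝ) + mu + 1/2) ≠ 0 := by positivity
    have hG : Real.Gamma ((m:ℝ) + mu + 3/2) = ((m:ℝ) + mu + 1/2) * Real.Gamma ((m:ℝ) + mu + 1/2) := by
      have := Real.Gamma_add_one harg
      rw [show (m:ℝ) + mu + 1/2 + 1 = (m:ℝ) + mu + 3/2 by ring] at this
      exact this
    unfold gammaD theta
    rw [if_neg hok, if_pos hek, if_neg hok, hdiv1, hdiv2, hG]
    field_simp
    push_cast
    ring
  · obtain ⟨m, rfl⟩ := ho
    have hok : ¬ Even (2*m + 1) := by simp [Nat.even_add_one, parity_simps]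
    have hek : Even (2*m + 1 + 1) := by refine ⟨m+1, by omega⟩
    have hdiv1 : (2*m + 1) / 2 = m := by omega
    have hdiv2 : (2*m + 1 + 1) / 2 = m + 1 := by omega
    unfold gammaD theta
    rw [if_pos hek, if_neg hok, if_pos hek, hdiv1, hdiv2]
    rw [show (((m+1:ℕ)):ℝ) + mu + 1/2 = (m:ℝ) + mu + 3/2 by push_cast; ring]
    rw [Nat.factorial_succ]
    field_simp
    push_cast
    ring

lemma gammaD_ge_factorial {mu : ℝ} (hmu : 0 ≤ mu) (k : ℕ) :
    (Nat.factorial k : ℝ) ≤ gammaD mu k := by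
  induction k with
  | zero => simp [gammaD_zero hmu]
  | succ k ih =>
    rw [gammaD_succ hmu, Nat.factorial_succ]
    push_cast
    have h2 : (0:ℝ) ≤ 2 * mu * theta (k+1) := by
      have := theta_nonneg (k+1); positivity
    have hf : (0:ℝ) < Nat.factorial k := by exact_mod_cast Nat.factorial_pos k
    nlinarith [gammaD_pos hmu k]

lemma summable1 {mu y : ℝ} (hmu : 0 ≤ mu) (hy : 0 ≤ y) :
    Summable fun k : ℕ => y ^ k / gammaD mu k := by
  refine Summable.of_nonneg_of_le
    (fun k => div_nonneg (pow_nonneg hy k) (gammaD_pos hmu k).le)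
    (fun k => ?_) (Real.summable_pow_div_factorial y)
  exact div_le_div_of_nonneg_left (by positivity) (by positivity) (gammaD_ge_factorial hmu k)

lemma eD_pos {mu y : ℝ} (hmu : 0 ≤ mu) (hy : 0 ≤ y) : 0 < eD mu y := by
  refine Summable.tsum_pos (summable1 hmu hy)
    (fun k => div_nonneg (pow_nonneg hy k) (gammaD_pos hmu k).le) 0 ?_
  simp [gammaD_zero hmu]

lemma summable2 {mu y : ℝ} (hmu : 0 ≤ mu) (hy : 0 ≤ y) :
    Summable fun k : ℕ => y ^ k / gammaD mu k * ((k : ℝ) + 2 * mu * theta k) := by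
  rw [← summable_nat_add_iff 1]
  have : (fun k : ℕ => y ^ (k+1) / gammaD mu (k+1) * (((k+1 : ℕ) : ℝ) + 2 * mu * theta (k+1)))
      = fun k : ℕ => y * (y ^ k / gammaD mu k) := by
    funext k
    rw [gammaD_succ hmu k]
    have hc : ((k : ℝ) + 1 + 2 * mu * theta (k+1)) ≠ 0 := by
      have := theta_nonneg (k+1); positivity
    have hg := (gammaD_pos hmu k).ne'
    push_cast
    field_simp
    ring
  rw [this]
  exact (summable1 hmu hy).mul_left y

lemma tsum2 {mu y : ℝ} (hmu : 0 ≤ mu) (hy : 0 ≤ y) :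
    ∑' k : ℕ, y ^ k / gammaD mu k * ((k : ℝ) + 2 * mu * theta k) = y * eD mu y := by
  rw [Summable.tsum_eq_zero_add (summable2 hmu hy)]
  have h0 : y ^ 0 / gammaD mu 0 * (((0:ℕ) : ℝ) + 2 * mu * theta 0) = 0 := by
    simp [theta]
  rw [h0, zero_add]
  have heq : (fun k : ℕ => y ^ (k+1) / gammaD mu (k+1) * (((k+1 : ℕ) : ℝ) + 2 * mu * theta (k+1)))
      = fun k : ℕ => y * (y ^ k / gammaD mu k) := by
    funext k
    rw [gammaD_succ hmu k]
    have hc : ((k : ℝ) + 1 + 2 * mu * theta (k+1)) ≠ 0 := by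
      have := theta_nonneg (k+1); positivity
    have hg := (gammaD_pos hmu k).ne'
    push_cast
    field_simp
    ring
  rw [tsum_congr (fun k => congrFun heq k), tsum_mul_left]
  rfl

lemma integral_linear (p q u v : ℝ) :
    ∫ t in u..v, (p * t + q) = p * (v^2 - u^2)/2 + q * (v - u) := by
  have h1 : IntervalIntegrable (fun t : ℝ => p * t) MeasureTheory.volume u v := by
    apply Continuous.intervalIntegrable; continuity
  rw [intervalIntegral.integral_add h1 intervalIntegrable_const,
      intervalIntegral.integral_const_mul, integral_id, intervalIntegral.integral_const]
  simp only [smul_eq_mul]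
  ring

theorem KnStar_central_first (mu a b : ℝ) (hmu : 0 ≤ mu) (ha : 0 ≤ a) (hab : a ≤ b)
    (n : ℕ) (hn : 0 < n) (x : ℝ) (hx : 1 / 2 ≤ x) :
    KnStar mu a b n (fun t => t - x) x = (n / (n + b) - 1) * x + a / (n + b) := by
  have hnR : (0:ℝ) < n := Nat.cast_pos.mpr hn
  have hn1 : (1:ℝ) ≤ n := by exact_mod_cast hn
  have hnb : (0:ℝ) < (n:ℝ) + b := by linarith [ha.trans hab]
  have hyval : (n:ℝ) * rn n x = (n:ℝ) * x - 1/2 := by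
    unfold rn; field_simp
  set y : ℝ := (n:ℝ) * rn n x with hydef
  have hy0 : 0 ≤ y := by
    rw [hyval]
    nlinarith
  have hE : 0 < eD mu y := eD_pos hmu hy0
  set C : ℝ := (1/2 + a)/((n:ℝ)*((n:ℝ)+b)) - x/(n:ℝ) with hC
  have hint : ∀ k : ℕ,
      (∫ t in (((k : ℝ) + 2 * mu * theta k) / n)..(((k : ℝ) + 1 + 2 * mu * theta k) / n),
        (((n:ℝ) * t + a) / ((n:ℝ) + b) - x))
      = (1/((n:ℝ)*((n:ℝ)+b))) * ((k:ℝ) + 2*mu*theta k) + C := by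
    intro k
    have heq : ∀ t : ℝ, ((n:ℝ) * t + a) / ((n:ℝ) + b) - x
        = ((n:ℝ)/((n:ℝ)+b)) * t + (a/((n:ℝ)+b) - x) := by
      intro t; field_simp; ring
    simp only [heq]
    rw [integral_linear]
    rw [hC]
    field_simp
    ring
  have hKn : KnStar mu a b n (fun t => t - x) x
      = ((n:ℝ) / eD mu y) * ∑' k : ℕ,
        ((1/((n:ℝ)*((n:ℝ)+b))) * (y ^ k / gammaD mu k * ((k:ℝ) + 2*mu*theta k))
         + C * (y ^ k / gammaD mu k)) := by
    unfold KnStar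
    congr 1
    refine tsum_congr fun k => ?_
    rw [← hydef, hint k]
    ring
  rw [hKn, Summable.tsum_add (((summable2 hmu hy0).mul_left _)) (((summable1 hmu hy0).mul_left _)),
    tsum_mul_left, tsum_mul_left, tsum2 hmu hy0]
  have hEd : (∑' k : ℕ, y ^ k / gammaD mu k) = eD mu y := rfl
  rw [hEd]
  rw [hC]
  have hEne := hE.ne'
  field_simp
  rw [hyval]
  ring
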